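/- Let z be an IEEE 754 float with 1 + 2^{1−p} < |z| ≤ f_max (strictly greater than the successor of 1). Then f_max ⊘ (f_max ⊘ |z|⁻⁻) < |z|, where v⁻⁻ denotes the predecessor of the predecessor of v and ⊘ is round-to-nearest ties-to-even division. -/

import Mathlib

open scoped Classical

/-- Finite binary floating-point numbers with precision `p` and exponent range
`[emin, emax]` (subnormals included), viewed as real numbers. -/
def FF (p : ℕ) (emin emax : ℤ) : Set ℝ :=
  {x | ∃ m e : ℤ, |m| < 2 ^ p ∧ emin ≤ e ∧ e ≤ emax ∧
        x = (m : ℝ) * (2 : ℝ) ^ (e + 1 - (p : ℤ))}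

/-- Binary floating-point numbers with precision `p` and unbounded exponent. -/
def FInf (p : ℕ) : Set ℝ :=
  {x | ∃ m e : ℤ, |m| < 2 ^ p ∧ x = (m : ℝ) * (2 : ℝ) ^ e}

/-- `z` has an even least-significant significand bit (canonical representation),
format with bounded exponents. -/
def evenFF (p : ℕ) (emin emax : ℤ) (z : ℝ) : Prop :=
  ∃ m e : ℤ, |m| < 2 ^ p ∧ emin ≤ e ∧ e ≤ emax ∧
    z = (m : ℝ) * (2 : ℝ) ^ (e + 1 - (p : ℤ)) ∧ 2 ∣ m ∧
    ((2 : ℤ) ^ (p - 1) ≤ |m| ∨ e = emin)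

/-- `z` has an odd least-significant significand bit (canonical representation). -/
def oddFF (p : ℕ) (emin emax : ℤ) (z : ℝ) : Prop :=
  ∃ m e : ℤ, |m| < 2 ^ p ∧ emin ≤ e ∧ e ≤ emax ∧
    z = (m : ℝ) * (2 : ℝ) ^ (e + 1 - (p : ℤ)) ∧ ¬ 2 ∣ m ∧
    ((2 : ℤ) ^ (p - 1) ≤ |m| ∨ e = emin)

/-- Evenness of the significand for the unbounded-exponent format. -/
def evenInf (p : ℕ) (z : ℝ) : Prop :=
  ∃ m e : ℤ, z = (m : ℝ) * (2 : ℝ) ^ e ∧ 2 ∣ m ∧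
    (((2 : ℤ) ^ (p - 1) ≤ |m| ∧ |m| < 2 ^ p) ∨ m = 0)

/-- `rnd` is round-to-nearest with ties-to-even onto the set `F` of representable
numbers, `even` being the evenness predicate used to break ties. -/
def IsRNE (F : Set ℝ) (even : ℝ → Prop) (rnd : ℝ → ℝ) : Prop :=
  ∀ x : ℝ, rnd x ∈ F ∧ (∀ y ∈ F, |x - rnd x| ≤ |x - y|) ∧
    (∀ y ∈ F, y ≠ rnd x → |x - rnd x| = |x - y| → even (rnd x))

/-- The successor of `x` in the set `F`. -/
noncomputable def succF (F : Set ℝ) (x : ℝ) : ℝ := sInf {y | y ∈ F ∧ x < y}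

/-- The predecessor of `x` in the set `F`. -/
noncomputable def predF (F : Set ℝ) (x : ℝ) : ℝ := sSup {y | y ∈ F ∧ y < x}

/-- The largest finite float, `f_max = (2 - 2^(1-p)) * 2^emax`. -/
noncomputable def fmax (p : ℕ) (emax : ℤ) : ℝ :=
  (2 - (2 : ℝ) ^ (1 - (p : ℤ))) * (2 : ℝ) ^ emax

/-- The smallest positive (subnormal) float, `f_min = 2^(emin+1-p)`. -/
noncomputable def fminF (p : ℕ) (emin : ℤ) : ℝ := (2 : ℝ) ^ (emin + 1 - (p : ℤ))


/-!
Write `a = |z|⁻` and `u = a⁻`, so that `u ≥ 1`, and let `δ = 2 ^ (⌊log₂ u⌋ + 1 - p)` be the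
spacing of the floats in the binade of `u`; then `a ≥ u + δ` and `|z| ≥ a + δ`. The quotient
`f_max / u` lies in the normal range, where rounding has relative error at most `ε = 2⁻ᵖ`, so
`f_max / (f_max ⊘ u) ≤ u / (1 - ε) < u + 3δ/2 ≤ (a + |z|) / 2`. A number below the midpoint of
the float `a` and `|z|` cannot round to `|z|` or beyond.
-/

lemma round_mono {α : Type*} [Field α] [LinearOrder α] [IsStrictOrderedRing α] [FloorRing α] :
    Monotone (round : α → ℤ) := fun x y hxy => by
  simpa only [round_eq] using Int.floor_mono (by linarith : x + 1 / 2 ≤ y + 1 / 2)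

section Format

variable {p : ℕ} {emin emax : ℤ}

lemma finite_FF : (FF p emin emax).Finite := by
  refine (((Set.finite_Icc (-(2 ^ p : ℤ)) (2 ^ p)).prod (Set.finite_Icc emin emax)).image
    fun q : ℤ × ℤ => (q.1 : ℝ) * (2 : ℝ) ^ (q.2 + 1 - (p : ℤ))).subset ?_
  rintro x ⟨m, e, hm, h1, h2, rfl⟩
  obtain ⟨hm1, hm2⟩ := abs_lt.1 hm
  exact ⟨(m, e), ⟨⟨hm1.le, hm2.le⟩, h1, h2⟩, rfl⟩

lemma abs_mem_FF {z : ℝ} (hz : z ∈ FF p emin emax) : |z| ∈ FF p emin emax := by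
  obtain ⟨m, e, hm, h1, h2, rfl⟩ := hz
  refine ⟨|m|, e, by rwa [abs_abs], h1, h2, ?_⟩
  rw [abs_mul, abs_of_pos (a := (2 : ℝ) ^ (e + 1 - (p : ℤ))) (by positivity), Int.cast_abs]

lemma two_pow_pred_mul_two_zpow (hp : 1 ≤ p) (k : ℤ) :
    ((2 ^ (p - 1) : ℤ) : ℝ) * (2 : ℝ) ^ (k + 1 - (p : ℤ)) = 2 ^ k := by
  push_cast
  rw [← zpow_natCast, ← zpow_add₀ two_ne_zero]
  congr 1
  omega

lemma one_mem_FF (hp : 1 ≤ p) (hemin : emin ≤ 0) (hemax : 0 ≤ emax) :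
    (1 : ℝ) ∈ FF p emin emax := by
  refine ⟨2 ^ (p - 1), 0, ?_, hemin, hemax, ?_⟩
  · rw [abs_of_pos (by positivity)]
    exact pow_lt_pow_right₀ one_lt_two (by omega)
  · rw [two_pow_pred_mul_two_zpow hp, zpow_zero]

lemma one_add_two_zpow_mem_FF (hp : 2 ≤ p) (hemin : emin ≤ 0) (hemax : 0 ≤ emax) :
    1 + (2 : ℝ) ^ (1 - (p : ℤ)) ∈ FF p emin emax := by
  refine ⟨2 ^ (p - 1) + 1, 0, ?_, hemin, hemax, ?_⟩
  · have h2 : (2 : ℤ) ^ 1 ≤ 2 ^ (p - 1) := pow_le_pow_right₀ (by norm_num) (by omega)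
    have hsucc : (2 : ℤ) ^ p = 2 ^ (p - 1) * 2 := by rw [← pow_succ]; congr 1; omega
    rw [abs_of_pos (by positivity)]
    omega
  · rw [Int.cast_add, add_mul, two_pow_pred_mul_two_zpow (by omega), zpow_zero, Int.cast_one,
      one_mul, zero_add]

lemma fmax_eq : fmax p emax = ((2 ^ p - 1 : ℤ) : ℝ) * (2 : ℝ) ^ (emax + 1 - (p : ℤ)) := by
  have h1 : (2 : ℝ) ^ (p : ℤ) * 2 ^ (emax + 1 - (p : ℤ)) = 2 * 2 ^ emax := by
    rw [← zpow_add₀ two_ne_zero, add_sub_cancel, zpow_add_one₀ two_ne_zero, mul_comm]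
  have h2 : (2 : ℝ) ^ (1 - (p : ℤ)) * 2 ^ emax = 2 ^ (emax + 1 - (p : ℤ)) := by
    rw [← zpow_add₀ two_ne_zero]
    ring_nf
  rw [fmax, Int.cast_sub, Int.cast_pow, Int.cast_ofNat, Int.cast_one, ← zpow_natCast]
  linear_combination -h1 - h2

lemma fmax_mem_FF (hemin : emin ≤ emax) : fmax p emax ∈ FF p emin emax := by
  refine ⟨2 ^ p - 1, emax, ?_, hemin, le_rfl, fmax_eq⟩
  have : (0 : ℤ) < 2 ^ p := by positivity
  rw [abs_of_nonneg (by omega)]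
  omega

lemma fmax_lt_two_zpow : fmax p emax < (2 : ℝ) ^ (emax + 1) := by
  have : (0 : ℝ) < 2 ^ (1 - (p : ℤ)) * 2 ^ emax := by positivity
  rw [fmax, zpow_add_one₀ two_ne_zero]
  linarith

lemma int_mul_two_zpow_mem_FF (hp : 1 ≤ p) {n E : ℤ} (hn0 : 0 ≤ n) (hn : n ≤ 2 ^ p)
    (hE : emin ≤ E) (hEmax : E ≤ emax) (hM : n * (2 : ℝ) ^ (E + 1 - (p : ℤ)) ≤ fmax p emax) :
    n * (2 : ℝ) ^ (E + 1 - (p : ℤ)) ∈ FF p emin emax := by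
  rcases hn.lt_or_eq with hn | rfl
  · exact ⟨n, E, by rwa [abs_of_nonneg hn0], hE, hEmax, rfl⟩
  -- `2 ^ p` is not a significand: write `2 ^ (E + 1)` one binade up.
  have hval : ((2 ^ p : ℤ) : ℝ) * 2 ^ (E + 1 - (p : ℤ)) = 2 ^ (E + 1) := by
    rw [Int.cast_pow, Int.cast_ofNat, ← zpow_natCast, ← zpow_add₀ two_ne_zero, add_sub_cancel]
  have hEmax' : E < emax := by
    by_contra! h
    have := zpow_le_zpow_right₀ (by norm_num : (1 : ℝ) ≤ 2) (show emax + 1 ≤ E + 1 by omega)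
    linarith [fmax_lt_two_zpow (p := p) (emax := emax)]
  rw [hval]
  refine ⟨2 ^ (p - 1), E + 1, ?_, by omega, by omega, (two_pow_pred_mul_two_zpow hp _).symm⟩
  rw [abs_of_pos (by positivity)]
  exact pow_lt_pow_right₀ one_lt_two (by omega)

lemma exists_int_mul_of_two_zpow_le {w : ℝ} (hw : w ∈ FF p emin emax) {E : ℤ}
    (hE : (2 : ℝ) ^ E ≤ w) : ∃ k : ℤ, w = k * (2 : ℝ) ^ (E + 1 - (p : ℤ)) := by
  obtain ⟨m, e, hm, -, -, rfl⟩ := hw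
  rcases le_or_gt E e with h | h
  · refine ⟨m * 2 ^ (e - E).toNat, ?_⟩
    rw [Int.cast_mul, Int.cast_pow, Int.cast_ofNat, ← zpow_natCast, Int.toNat_of_nonneg (by omega),
      mul_assoc, ← zpow_add₀ two_ne_zero]
    ring_nf
  · exfalso
    have hm' : (m : ℝ) < 2 ^ (p : ℤ) := by
      rw [zpow_natCast]
      exact_mod_cast (le_abs_self m).trans_lt hm
    have hlt : (m : ℝ) * 2 ^ (e + 1 - (p : ℤ)) < 2 ^ (e + 1) := by
      calc (m : ℝ) * 2 ^ (e + 1 - (p : ℤ)) < 2 ^ (p : ℤ) * 2 ^ (e + 1 - (p : ℤ)) :=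
            mul_lt_mul_of_pos_right hm' (zpow_pos two_pos _)
        _ = 2 ^ (e + 1) := by rw [← zpow_add₀ two_ne_zero, add_sub_cancel]
    have := zpow_le_zpow_right₀ (by norm_num : (1 : ℝ) ≤ 2) (show e + 1 ≤ E by omega)
    linarith

lemma add_two_zpow_le_of_lt {u a : ℝ} (hu : u ∈ FF p emin emax) (ha : a ∈ FF p emin emax)
    {E : ℤ} (hE : (2 : ℝ) ^ E ≤ u) (hua : u < a) : u + (2 : ℝ) ^ (E + 1 - (p : ℤ)) ≤ a := by
  obtain ⟨k, rfl⟩ := exists_int_mul_of_two_zpow_le hu hE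
  obtain ⟨l, rfl⟩ := exists_int_mul_of_two_zpow_le ha (hE.trans hua.le)
  have hδ : (0 : ℝ) < 2 ^ (E + 1 - (p : ℤ)) := zpow_pos two_pos _
  have hkl : (k : ℝ) + 1 ≤ l := by exact_mod_cast (mul_lt_mul_iff_of_pos_right hδ).1 hua
  nlinarith

lemma exists_mem_FF_abs_sub_le (hp : 1 ≤ p) {t : ℝ} (ht : (2 : ℝ) ^ emin ≤ t)
    (htM : t ≤ fmax p emax) : ∃ f ∈ FF p emin emax, |t - f| ≤ t * 2 ^ (-(p : ℤ)) := by
  have htpos : 0 < t := (zpow_pos two_pos _).trans_le ht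
  set E := Int.log 2 t
  have hEt : (2 : ℝ) ^ E ≤ t := by exact_mod_cast Int.zpow_log_le_self one_lt_two htpos
  have hEmin : emin ≤ E := (Int.zpow_le_iff_le_log one_lt_two htpos).1 (by exact_mod_cast ht)
  have hEmax : E ≤ emax := Int.lt_add_one_iff.1 <| (Int.lt_zpow_iff_log_lt one_lt_two htpos).1
    (by exact_mod_cast htM.trans_lt fmax_lt_two_zpow)
  set δ : ℝ := 2 ^ (E + 1 - (p : ℤ)) with hδdef
  have hδ : 0 < δ := zpow_pos two_pos _
  have htδ : t / δ ≤ ((2 ^ p : ℤ) : ℝ) := by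
    rw [div_le_iff₀ hδ, Int.cast_pow, Int.cast_ofNat, ← zpow_natCast, ← zpow_add₀ two_ne_zero,
      add_sub_cancel]
    exact_mod_cast (Int.lt_zpow_succ_log_self one_lt_two t).le
  obtain ⟨N, hN⟩ := exists_int_mul_of_two_zpow_le (fmax_mem_FF (hEmin.trans hEmax)) (hEt.trans htM)
  have htN : t / δ ≤ N := by rwa [div_le_iff₀ hδ, ← hN]
  set n := round (t / δ)
  refine ⟨n * δ, int_mul_two_zpow_mem_FF hp ?_ ?_ hEmin hEmax ?_, ?_⟩
  · simpa only [round_zero] using round_mono (div_pos htpos hδ).le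
  · simpa only [round_intCast] using round_mono htδ
  · have hnN : n ≤ N := by simpa only [round_intCast] using round_mono htN
    rw [hN]
    exact mul_le_mul_of_nonneg_right (Int.cast_le.2 hnN) hδ.le
  · calc |t - n * δ| = |t / δ - n| * δ := by
          rw [← abs_of_pos hδ, ← abs_mul, abs_of_pos hδ, sub_mul, div_mul_cancel₀ _ hδ.ne']
      _ ≤ 1 / 2 * δ := mul_le_mul_of_nonneg_right (abs_sub_round _) hδ.le
      _ = 2 ^ E * 2 ^ (-(p : ℤ)) := by
          rw [hδdef, show E + 1 - (p : ℤ) = E + -(p : ℤ) + 1 by ring, zpow_add_one₀ two_ne_zero,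
            zpow_add₀ two_ne_zero]
          ring
      _ ≤ t * 2 ^ (-(p : ℤ)) := mul_le_mul_of_nonneg_right hEt (zpow_pos two_pos _).le

end Format

lemma isGreatest_predF {F : Set ℝ} (hF : F.Finite) {x y : ℝ} (hy : y ∈ F) (hyx : y < x) :
    IsGreatest {w | w ∈ F ∧ w < x} (predF F x) :=
  have hS : {w | w ∈ F ∧ w < x}.Finite := hF.subset fun _ hw => hw.1
  ⟨Set.Nonempty.csSup_mem ⟨y, hy, hyx⟩ hS, fun _ hw => le_csSup hS.bddAbove hw⟩

section Rounding

variable {F : Set ℝ} {ev : ℝ → Prop} {rnd : ℝ → ℝ}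

lemma rnd_lt_of_lt_midpoint (hrnd : IsRNE F ev rnd) {a x s : ℝ} (ha : a ∈ F) (hax : a < x)
    (hs : s < (a + x) / 2) : rnd s < x := by
  by_contra! hxs
  have hfar : x - s ≤ |s - rnd s| := by
    rw [abs_sub_comm]
    exact (sub_le_sub_right hxs s).trans (le_abs_self _)
  have hcloser : |s - a| < x - s := abs_sub_lt_iff.2 ⟨by linarith, by linarith⟩
  linarith [(hrnd s).2.1 a ha]

variable {p : ℕ} {emin emax : ℤ}

lemma abs_sub_rnd_le (hp : 1 ≤ p) (hrnd : IsRNE (FF p emin emax) ev rnd) {t : ℝ}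
    (ht : (2 : ℝ) ^ emin ≤ t) (htM : t ≤ fmax p emax) : |t - rnd t| ≤ t * 2 ^ (-(p : ℤ)) :=
  have ⟨f, hf, htf⟩ := exists_mem_FF_abs_sub_le hp ht htM
  ((hrnd t).2.1 f hf).trans htf

lemma fmax_div_rnd_fmax_div_lt (hp : 2 ≤ p) (hemin : emin ≤ 0)
    (hrnd : IsRNE (FF p emin emax) ev rnd) {u : ℝ} (hu : 1 ≤ u) (huM : u ≤ fmax p emax) :
    fmax p emax / rnd (fmax p emax / u) < u + 3 / 2 * 2 ^ (Int.log 2 u + 1 - (p : ℤ)) := by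
  set M := fmax p emax
  set t := M / u
  set ε : ℝ := 2 ^ (-(p : ℤ))
  have hε : ε ≤ 1 / 4 := by
    rw [show (1 / 4 : ℝ) = 2 ^ (-2 : ℤ) by norm_num]
    exact zpow_le_zpow_right₀ (by norm_num : (1 : ℝ) ≤ 2) (by omega)
  have huε : u * ε < 2 ^ (Int.log 2 u + 1 - (p : ℤ)) := by
    rw [sub_eq_add_neg, zpow_add₀ two_ne_zero]
    exact mul_lt_mul_of_pos_right (by exact_mod_cast Int.lt_zpow_succ_log_self one_lt_two u)
      (zpow_pos two_pos _)
  have hM : 0 < M := by linarith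
  have ht : 1 ≤ t := (one_le_div (by linarith)).2 huM
  have hq : t * (1 - ε) ≤ rnd t := by
    have := abs_sub_rnd_le (by omega) hrnd ((zpow_le_one_of_nonpos₀ one_le_two hemin).trans ht)
      (div_le_self hM.le hu)
    linarith [le_abs_self (t - rnd t)]
  have hε0 : 0 < ε := zpow_pos two_pos _
  calc M / rnd t ≤ M / (t * (1 - ε)) := div_le_div_of_nonneg_left hM.le (by nlinarith) hq
    _ = u / (1 - ε) := by
      simp only [t]
      field_simp
    _ < _ := by
      rw [div_lt_iff₀ (by linarith)]
      nlinarith [mul_le_mul_of_nonneg_left hε (zpow_pos two_pos (Int.log 2 u + 1 - (p : ℤ))).le]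

end Rounding

/-- For a float `z` with `1 + 2^(1-p) < |z| ≤ f_max`,
`f_max ⊘ (f_max ⊘ |z|⁻⁻) < |z|`. -/
theorem div_div_pred_pred (p : ℕ) (hp : 2 ≤ p) (emin emax : ℤ)
    (hemin : emin ≤ 0) (hemax : 1 ≤ emax)
    (rnd : ℝ → ℝ)
    (hrnd : IsRNE (FF p emin emax) (evenFF p emin emax) rnd)
    (z : ℝ) (hz : z ∈ FF p emin emax)
    (h1 : 1 + (2 : ℝ) ^ (1 - (p : ℤ)) < |z|) (h2 : |z| ≤ fmax p emax) :
    rnd (fmax p emax /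
          rnd (fmax p emax / predF (FF p emin emax) (predF (FF p emin emax) |z|)))
      < |z| := by
  have hone : (1 : ℝ) ∈ FF p emin emax := one_mem_FF (by omega) hemin (by omega)
  have hsucc : 1 + (2 : ℝ) ^ (1 - (p : ℤ)) ∈ FF p emin emax :=
    one_add_two_zpow_mem_FF hp hemin (by omega)
  obtain ⟨⟨haF, hax⟩, ha⟩ := isGreatest_predF finite_FF hsucc h1
  set a := predF (FF p emin emax) |z|
  have h1a : 1 < a := (lt_add_of_pos_right 1 (zpow_pos two_pos _)).trans_le (ha ⟨hsucc, h1⟩)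
  obtain ⟨⟨huF, hua⟩, hu⟩ := isGreatest_predF finite_FF hone h1a
  set u := predF (FF p emin emax) a
  have h1u : 1 ≤ u := hu ⟨hone, h1a⟩
  have hEu : (2 : ℝ) ^ Int.log 2 u ≤ u := Int.zpow_log_le_self one_lt_two (by linarith)
  have hau := add_two_zpow_le_of_lt huF haF hEu hua
  have hxa := add_two_zpow_le_of_lt haF (abs_mem_FF hz) (hEu.trans hua.le) hax
  refine rnd_lt_of_lt_midpoint hrnd haF hax ?_
  calc _ < u + 3 / 2 * (2 : ℝ) ^ (Int.log 2 u + 1 - (p : ℤ)) :=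
        fmax_div_rnd_fmax_div_lt hp hemin hrnd h1u (by linarith)
    _ ≤ (a + |z|) / 2 := by linarith
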